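/- With a, x, y as in the generalized setting, for all natural numbers n and l: (1 + 4a) · x_n · x_{n+l} = y_{2n+l} − (−a)^n · y_l. -/
import Mathlib

def x (a : ℕ) : ℕ → ℤ
  | 0 => 0
  | 1 => 1
  | n + 2 => x a (n + 1) + (a : ℤ) * x a n

def y (a : ℕ) : ℕ → ℤ
  | 0 => 2
  | 1 => 1
  | n + 2 => y a (n + 1) + (a : ℤ) * y a n

lemma aux (a : ℕ) : ∀ m : ℕ, 2 * x a (m + 1) = x a m + y a m ∧
    2 * y a (m + 1) = (1 + 4 * (a:ℤ)) * x a m + y a m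
  | 0 => by norm_num [x, y]
  | 1 => by norm_num [x, y]; ring
  | (m + 2) => by
    obtain ⟨h1, h2⟩ := aux a m
    obtain ⟨h3, h4⟩ := aux a (m + 1)
    rw [show m + 1 + 1 = m + 2 from rfl] at h3 h4
    have rx : x a (m + 2) = x a (m + 1) + (a:ℤ) * x a m := by rw [x]
    have ry : y a (m + 2) = y a (m + 1) + (a:ℤ) * y a m := by rw [y]
    constructor
    · show 2 * x a (m + 1 + 2) = x a (m + 2) + y a (m + 2)
      rw [x, x, y]
      linear_combination h3 + (a:ℤ) * h1 - 2 * rx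
    · show 2 * y a (m + 1 + 2) = (1 + 4 * (a:ℤ)) * x a (m + 2) + y a (m + 2)
      rw [y, x, y]
      linear_combination h4 + (a:ℤ) * h2 - 2 * ry

lemma add_formula (a : ℕ) (n : ℕ) : ∀ m : ℕ,
    2 * x a (n + m) = x a n * y a m + y a n * x a m ∧
    2 * y a (n + m) = y a n * y a m + (1 + 4 * (a:ℤ)) * x a n * x a m
  | 0 => by
    refine ⟨?_, ?_⟩ <;> norm_num [x, y] <;> ring
  | 1 => by
    obtain ⟨h1, h2⟩ := aux a n
    norm_num [x, y]
    exact ⟨by linarith, by linarith⟩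
  | (m + 2) => by
    obtain ⟨h1, h2⟩ := add_formula a n m
    obtain ⟨h3, h4⟩ := add_formula a n (m + 1)
    rw [show n + (m + 2) = (n + m) + 2 from by omega,
        show n + (m + 1) = (n + m) + 1 from by omega] at *
    have rx : x a (n + m + 2) = x a (n + m + 1) + (a:ℤ) * x a (n + m) := by rw [x]
    have ry : y a (n + m + 2) = y a (n + m + 1) + (a:ℤ) * y a (n + m) := by rw [y]
    have rx2 : x a (m + 2) = x a (m + 1) + (a:ℤ) * x a m := by rw [x]
    have ry2 : y a (m + 2) = y a (m + 1) + (a:ℤ) * y a m := by rw [y]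
    constructor
    · linear_combination h3 + (a:ℤ) * h1 + 2 * rx - y a n * rx2 - x a n * ry2
    · linear_combination h4 + (a:ℤ) * h2 + 2 * ry - y a n * ry2 - (1 + 4 * (a:ℤ)) * x a n * rx2

lemma norm_id (a : ℕ) : ∀ n : ℕ,
    y a n ^ 2 - (1 + 4 * (a:ℤ)) * x a n ^ 2 = 4 * (-(a:ℤ)) ^ n
  | 0 => by norm_num [x, y]
  | (n + 1) => by
    obtain ⟨h1, h2⟩ := aux a n
    have ih := norm_id a n
    have h4 : 4 * (y a (n+1) ^ 2 - (1 + 4 * (a:ℤ)) * x a (n+1) ^ 2) =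
        4 * (4 * (-(a:ℤ)) ^ (n+1)) := by
      linear_combination (2 * y a (n+1) + (1 + 4 * (a:ℤ)) * x a n + y a n) * h2
        - (1 + 4 * (a:ℤ)) * (2 * x a (n+1) + x a n + y a n) * h1
        - 4 * (a:ℤ) * ih
    linarith

theorem stmt18 (a : ℕ) (ha : a ≠ 0) : ∀ n l : ℕ,
    (1 + 4 * (a : ℤ)) * x a n * x a (n + l) = y a (2 * n + l) - (-(a : ℤ)) ^ n * y a l := by
  intro n l
  rw [show 2 * n + l = n + (n + l) from by omega]
  obtain ⟨B, C⟩ := add_formula a n l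
  have A := (add_formula a n (n + l)).2
  have Q := norm_id a n
  have h : 4 * ((1 + 4 * (a : ℤ)) * x a n * x a (n + l)) =
      4 * (y a (n + (n + l)) - (-(a : ℤ)) ^ n * y a l) := by
    linear_combination -2 * A + (1 + 4 * (a:ℤ)) * x a n * B - y a n * C - y a l * Q
  linarith
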